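/- arXiv:math/0602282 — 4 statements merged into one kernel-verified Lean document; each statement's English description precedes it below -/
import Mathlib

section
/- If G is a group in which the commutator subgroup equals the center, G' = Z(G), then any two central automorphisms of G commute. -/
/-!
A central automorphism `φ` moves every element by a central factor, so it fixes every commutator:
`φ ⁅a, b⁆ = ⁅a z, b w⁆ = ⁅a, b⁆` with `z, w` central. Hence it fixes `G' = Z(G)` pointwise, and then
`φ (ψ g) = g (g⁻¹ φ g) (g⁻¹ ψ g)`, which is symmetric in `φ` and `ψ` because the two factors are central.
-/

open Subgroup
open scoped commutatorElement

section

variable {G : Type*} [Group G]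

theorem commutatorElement_mul_mem_center_left (a b : G) {u : G} (hu : u ∈ center G) :
    ⁅a * u, b⁆ = ⁅a, b⁆ := by
  have : ⁅u, b⁆ = 1 := commutatorElement_eq_one_iff_mul_comm.mpr (mem_center_iff.mp hu b).symm
  rw [commutatorElement_mul_left_eq_conj_mul, this, mul_one, mul_inv_cancel, one_mul]

theorem commutatorElement_mul_mem_center_right (a b : G) {v : G} (hv : v ∈ center G) :
    ⁅a, b * v⁆ = ⁅a, b⁆ := by
  have : ⁅a, v⁆ = 1 := commutatorElement_eq_one_iff_mul_comm.mpr (mem_center_iff.mp hv a)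
  rw [commutatorElement_mul_right_eq_mul_conj, this, mul_one, mul_inv_cancel_right]

theorem map_commutatorElement_eq_of_central (f : G →* G) (hf : ∀ g, g⁻¹ * f g ∈ center G)
    (a b : G) : f ⁅a, b⁆ = ⁅a, b⁆ :=
  calc f ⁅a, b⁆ = ⁅a * (a⁻¹ * f a), b * (b⁻¹ * f b)⁆ := by
        rw [map_commutatorElement, mul_inv_cancel_left, mul_inv_cancel_left]
    _ = ⁅a, b⁆ := by
        rw [commutatorElement_mul_mem_center_left _ _ (hf a),
          commutatorElement_mul_mem_center_right _ _ (hf b)]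

theorem map_eq_self_of_mem_commutator_of_central (f : G →* G)
    (hf : ∀ g, g⁻¹ * f g ∈ center G) {z : G} (hz : z ∈ commutator G) : f z = z := by
  rw [commutator_eq_closure] at hz
  refine MonoidHom.eqOn_closure (g := MonoidHom.id G) ?_ hz
  rintro _ ⟨a, b, rfl⟩
  exact map_commutatorElement_eq_of_central f hf a b

theorem map_map_eq_mul_of_map_eq (f f' : G →* G) (g : G) (h : f (g⁻¹ * f' g) = g⁻¹ * f' g) :
    f (f' g) = g * (g⁻¹ * f g) * (g⁻¹ * f' g) := by
  conv_lhs => rw [← mul_inv_cancel_left g (f' g), map_mul, h]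
  rw [mul_inv_cancel_left]

theorem map_map_comm_of_central_of_fix_center (f f' : G →* G)
    (hf : ∀ g, g⁻¹ * f g ∈ center G) (hf' : ∀ g, g⁻¹ * f' g ∈ center G)
    (hf_fix : ∀ z ∈ center G, f z = z) (hf'_fix : ∀ z ∈ center G, f' z = z) (g : G) :
    f (f' g) = f' (f g) := by
  rw [map_map_eq_mul_of_map_eq f f' g (hf_fix _ (hf' g)),
    map_map_eq_mul_of_map_eq f' f g (hf'_fix _ (hf g)), mul_assoc g, mul_assoc g,
    mem_center_iff.mp (hf' g) (g⁻¹ * f g)]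

end

/-- If `G' = Z(G)`, then any two central automorphisms of `G` commute. -/
theorem central_auts_commute_of_commutator_eq_center (G : Type*) [Group G]
    (h : commutator G = Subgroup.center G) (φ ψ : G ≃* G)
    (hφ : ∀ g : G, g⁻¹ * φ g ∈ Subgroup.center G)
    (hψ : ∀ g : G, g⁻¹ * ψ g ∈ Subgroup.center G) :
    ∀ g : G, φ (ψ g) = ψ (φ g) := by
  have fix_center (θ : G ≃* G) (hθ : ∀ g, g⁻¹ * θ g ∈ center G) : ∀ z ∈ center G, θ z = z :=
    fun _ hz ↦ map_eq_self_of_mem_commutator_of_central θ.toMonoidHom hθ (h ▸ hz)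
  exact map_map_comm_of_central_of_fix_center φ.toMonoidHom ψ.toMonoidHom hφ hψ
    (fix_center φ hφ) (fix_center ψ hψ)
end

section
/- If G is a finite p-group of nilpotency class exactly 2, then the exponent of G' equals the exponent of G/Z(G). -/
/-!
If commutators are central then `⁅a, b⁆ ^ n = ⁅a ^ n, b⁆`, so `g ^ n` is central for every `g`
exactly when every commutator satisfies `⁅a, b⁆ ^ n = 1`. The commutator subgroup is generated by
pairwise commuting commutators, so its exponent divides `n` under the same condition, and the two
exponents have the same multiples.
-/

open scoped commutatorElement

open Subgroup

section

variable {G : Type*} [Group G]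

theorem commutatorElement_mem_center (h : commutator G ≤ center G) (a b : G) :
    ⁅a, b⁆ ∈ center G :=
  h (commutator_mem_commutator (mem_top a) (mem_top b))

theorem commutatorElement_pow_eq_pow_left (h : commutator G ≤ center G) (a b : G) (n : ℕ) :
    ⁅a, b⁆ ^ n = ⁅a ^ n, b⁆ := by
  induction n with
  | zero => simp
  | succ n ih =>
    have hc := mem_center_iff.mp (commutatorElement_mem_center h (a ^ n) b) a
    rw [pow_succ' a, commutatorElement_mul_left_eq_conj_mul, hc, mul_inv_cancel_right,
      ← ih, ← pow_succ]

theorem pow_mem_center_iff (h : commutator G ≤ center G) (g : G) (n : ℕ) :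
    g ^ n ∈ center G ↔ ∀ b : G, ⁅g, b⁆ ^ n = 1 := by
  simp only [mem_center_iff, commutatorElement_pow_eq_pow_left h,
    commutatorElement_eq_one_iff_commute, commute_iff_eq, eq_comm]

theorem exponent_quotient_center_dvd_iff (n : ℕ) :
    Monoid.exponent (G ⧸ center G) ∣ n ↔ ∀ g : G, g ^ n ∈ center G := by
  simp only [Monoid.exponent_dvd_iff_forall_pow_eq_one, QuotientGroup.forall_mk,
    ← QuotientGroup.mk_pow, QuotientGroup.eq_one_iff]

theorem exponent_commutator_dvd_iff (h : commutator G ≤ center G) (n : ℕ) :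
    Monoid.exponent (commutator G) ∣ n ↔ ∀ a b : G, ⁅a, b⁆ ^ n = 1 := by
  rw [Monoid.exponent_dvd_iff_forall_pow_eq_one, Subtype.forall]
  simp only [Subtype.ext_iff, SubmonoidClass.coe_pow, OneMemClass.coe_one]
  refine ⟨fun hx a b ↦ hx _ (commutator_mem_commutator (mem_top a) (mem_top b)), fun hab x hx ↦ ?_⟩
  rw [commutator_eq_closure] at hx
  induction hx using closure_induction with
  | mem x hx =>
    obtain ⟨a, b, rfl⟩ := hx
    exact hab a b
  | one => exact one_pow n
  | mul x y hx' _ hx hy =>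
    have hxy : Commute x y :=
      (mem_center_iff.mp (h (commutator_eq_closure G ▸ hx')) y).symm
    rw [hxy.mul_pow, hx, hy, one_mul]
  | inv x _ hx => rw [inv_pow, hx, inv_one]

end

theorem exponent_commutator_eq_exponent_quotient_center_general (G : Type*) [Group G]
    (h2 : commutator G ≤ Subgroup.center G) :
    Monoid.exponent ↥(commutator G) =
      Monoid.exponent (G ⧸ Subgroup.center G) :=
  eq_of_forall_dvd fun n ↦ by
    rw [exponent_commutator_dvd_iff h2, exponent_quotient_center_dvd_iff]
    simp only [pow_mem_center_iff h2]

/-- If `G` is a finite `p`-group of nilpotency class exactly 2, then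
`exp(G') = exp(G/Z(G))`. -/
theorem exponent_commutator_eq_exponent_quotient_center (G : Type*) [Group G]
    [Finite G] (p : ℕ) (hp : p.Prime) (hpG : IsPGroup p G)
    (h2 : commutator G ≤ Subgroup.center G)
    (hna : ¬ ∀ a b : G, a * b = b * a) :
    Monoid.exponent ↥(commutator G) =
      Monoid.exponent (G ⧸ Subgroup.center G) :=
  exponent_commutator_eq_exponent_quotient_center_general G h2
end

section
/- For the group G = G_n(m,p) defined by the presentation with generators a₀,...,aₙ and relations a₁^p = 1, a₂^{p^m} = 1, aᵢ^{p²} = 1 (3 ≤ i ≤ n), a_{n-1}^p = a₀^p, [a₁,a₀]=1, [aₙ,a₀]=a₁, [a_{i-1},a₀]=aᵢ^p (3 ≤ i ≤ n), [aᵢ,aⱼ]=1 (1 ≤ i < j ≤ n), the center satisfies Z(G) = ⟨a₂^p⟩ × G', and G is nilpotent of class 2. -/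
/-- The relations defining the group `G_n(m,p)` (a generalization of group
no. 92 of the Hall–Senior table) on generators `a₀, a₁, …, aₙ`. Commutators
are written `[x,y] = x⁻¹y⁻¹xy`. -/
def GnmpRels (n m p : ℕ) (hn : 3 ≤ n) : Set (FreeGroup (Fin (n + 1))) :=
  let a : Fin (n + 1) → FreeGroup (Fin (n + 1)) := fun i => FreeGroup.of i
  let a0 : FreeGroup (Fin (n + 1)) := a ⟨0, by omega⟩
  let a1 : FreeGroup (Fin (n + 1)) := a ⟨1, by omega⟩
  let a2 : FreeGroup (Fin (n + 1)) := a ⟨2, by omega⟩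
  -- a₁ᵖ = 1
  {a1 ^ p} ∪
  -- a₂^{pᵐ} = 1
  {a2 ^ p ^ m} ∪
  -- aᵢ^{p²} = 1 for 3 ≤ i ≤ n
  {w | ∃ i : ℕ, ∃ _ : 3 ≤ i, ∃ _ : i ≤ n, w = a ⟨i, by omega⟩ ^ p ^ 2} ∪
  -- a_{n-1}ᵖ = a₀ᵖ
  {a ⟨n - 1, by omega⟩ ^ p * (a0 ^ p)⁻¹} ∪
  -- [a₁, a₀] = 1
  {a1⁻¹ * a0⁻¹ * a1 * a0} ∪
  -- [aₙ, a₀] = a₁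
  {(a ⟨n, by omega⟩)⁻¹ * a0⁻¹ * a ⟨n, by omega⟩ * a0 * a1⁻¹} ∪
  -- [a_{i-1}, a₀] = aᵢᵖ for 3 ≤ i ≤ n
  {w | ∃ i : ℕ, ∃ _ : 3 ≤ i, ∃ _ : i ≤ n,
    w = (a ⟨i - 1, by omega⟩)⁻¹ * a0⁻¹ * a ⟨i - 1, by omega⟩ * a0 *
      (a ⟨i, by omega⟩ ^ p)⁻¹} ∪
  -- [aᵢ, aⱼ] = 1 for 1 ≤ i < j ≤ n
  {w | ∃ i j : ℕ, ∃ _ : 1 ≤ i, ∃ _ : i < j, ∃ _ : j ≤ n,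
    w = (a ⟨i, by omega⟩)⁻¹ * (a ⟨j, by omega⟩)⁻¹ * a ⟨i, by omega⟩ *
      a ⟨j, by omega⟩}

/-!
The generators a₁, …, aₙ commute, and a₀ acts on them by aₖ ↦ aₖ a_{k+1}^p (2 ≤ k < n),
aₙ ↦ aₙ a₁. Hence a₁ and every aₖ^p are central, the images of the generators in G/Z(G) commute,
and G' ≤ Z(G). Modulo G' every element is a product ∏ aᵢ^{xᵢ}; if it is central then p ∣ xᵢ for
all i ≠ 1, which puts it in ⟨a₂^p⟩G'. The divisibility is read off from a homomorphism into a Heisenberg-type group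
(x, y, z) ∈ ZMod p × (ℕ → ZMod p) × (ℕ → ZMod p²), where an element commutes with the images of
a₀ and aₙ only if its x- and y-coordinates vanish, and these coordinates record the xᵢ mod p.
The same homomorphism shows a₁ ≠ 1, and the abelian quotient a₂ ↦ 1 ∈ ZMod pᵐ, which kills G' and is
faithful on ⟨a₂⟩, shows ⟨a₂^p⟩ ∩ G' = 1.
-/

open scoped commutatorElement

section GroupTheory

open Subgroup

variable {G : Type*} [Group G]

theorem commute_pow_of_commutatorElement_inv {g h c : G} {k : ℕ} (hc : ⁅g⁻¹, h⁻¹⁆ = c)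
    (hgc : Commute g c) (hck : c ^ k = 1) : Commute (g ^ k) h := by
  have hconj : h⁻¹ * g * h = g * c := by
    rw [← hc, commutatorElement_def]
    group
  have := conj_pow (a := h⁻¹) (b := g) (i := k)
  rw [inv_inv, hconj, hgc.mul_pow, hck, mul_one] at this
  calc g ^ k * h = h * (h⁻¹ * g ^ k * h) := by group
    _ = h * g ^ k := by rw [← this]

theorem commutatorElement_mem_commutator (g h : G) : ⁅g, h⁆ ∈ commutator G := by
  rw [commutator_def]
  exact commutator_mem_commutator (mem_top g) (mem_top h)

theorem commutator_le_of_closure_eq_top {S : Set G} (hS : closure S = ⊤)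
    {N : Subgroup G} [N.Normal] (h : ∀ a ∈ S, ∀ b ∈ S, ⁅a, b⁆ ∈ N) : commutator G ≤ N := by
  set f := QuotientGroup.mk' N
  have hcomm : ∀ x ∈ f '' S, ∀ y ∈ f '' S, x * y = y * x := by
    rintro _ ⟨a, ha, rfl⟩ _ ⟨b, hb, rfl⟩
    rw [← commutatorElement_eq_one_iff_mul_comm, ← map_commutatorElement]
    exact (QuotientGroup.eq_one_iff _).mpr (h a ha b hb)
  have hclosure : closure (f '' S) = ⊤ := by
    rw [← MonoidHom.map_closure, hS, ← MonoidHom.range_eq_map, QuotientGroup.range_mk']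
  rw [commutator_def, Subgroup.commutator_le]
  intro a _ b _
  rw [← QuotientGroup.eq_one_iff (N := N), ← QuotientGroup.mk'_apply, map_commutatorElement,
    commutatorElement_eq_one_iff_mul_comm]
  have := closure_le_centralizer_centralizer (f '' S)
  exact Set.centralizer_centralizer_comm_of_comm hcomm _ (this (hclosure ▸ mem_top _)) _
    (this (hclosure ▸ mem_top _))

theorem MonoidHom.zpowers_inf_ker_eq_bot {H : Type*} [Group H] (f : G →* H) {a : G}
    (h : orderOf (f a) = orderOf a) : zpowers a ⊓ f.ker = ⊥ := by
  refine eq_bot_iff.mpr fun x hx => ?_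
  obtain ⟨⟨k, rfl⟩, hk⟩ := Subgroup.mem_inf.mp hx
  rw [mem_bot, ← orderOf_dvd_iff_zpow_eq_one, ← h, orderOf_dvd_iff_zpow_eq_one, ← map_zpow]
  exact hk

/-- Write `g ∈ K` as `∏ tᵢ^{xᵢ}` modulo `G'`; each coordinate `φᵢ` then gives `p ∣ xᵢ`. -/
theorem le_of_forall_mem_or_coordinate {ι : Type*} [Fintype ι] [DecidableEq ι] {t : ι → G}
    (ht : closure (Set.range t) = ⊤) {H K : Subgroup G} (hH : commutator G ≤ H) {p : ℕ}
    (hp : ∀ i, t i ^ p ∈ H)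
    (hcoord : ∀ i, t i ∈ H ∨ ∃ φ : G →* Multiplicative (ZMod p),
      (∀ j, φ (t j) = .ofAdd (if j = i then 1 else 0)) ∧ K ≤ φ.ker) : K ≤ H := by
  intro g hg
  have hclosure : closure (Set.range (Abelianization.of ∘ t)) = ⊤ := by
    rw [Set.range_comp, ← MonoidHom.map_closure, ht, ← MonoidHom.range_eq_map,
      MonoidHom.range_eq_top]
    exact QuotientGroup.mk_surjective
  obtain ⟨x, hx⟩ := mem_closure_range_iff_of_fintype.mp (hclosure ▸ mem_top (Abelianization.of g))
  suffices Abelianization.of g ∈ H.map Abelianization.of by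
    rwa [← mem_comap, comap_map_eq, Abelianization.ker_of, sup_eq_left.mpr hH] at this
  rw [hx]
  refine prod_mem fun i _ => ?_
  rcases hcoord i with hi | ⟨φ, hφ, hK⟩
  · exact zpow_mem (mem_map_of_mem _ hi) _
  · have hxi : ((x i : ℤ) : ZMod p) = 0 := by
      have := congrArg (Abelianization.lift φ) hx
      rw [Abelianization.lift_apply_of, hK hg, map_prod] at this
      simpa [hφ, toAdd_prod] using (congrArg Multiplicative.toAdd this).symm
    obtain ⟨c, hc⟩ := (ZMod.intCast_zmod_eq_zero_iff_dvd _ _).mp hxi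
    rw [Function.comp_apply, hc, zpow_mul, zpow_natCast, ← map_pow]
    exact zpow_mem (mem_map_of_mem _ (hp i)) _

end GroupTheory

@[ext] structure Heisenberg {X Y Z : Type*} [AddCommGroup X] [AddCommGroup Y] [AddCommGroup Z]
    (β : Y →+ X →+ Z) where
  x : X
  y : Y
  z : Z

namespace Heisenberg

variable {X Y Z : Type*} [AddCommGroup X] [AddCommGroup Y] [AddCommGroup Z] {β : Y →+ X →+ Z}

instance : Mul (Heisenberg β) := ⟨fun u v => ⟨u.x + v.x, u.y + v.y, u.z + v.z + β u.y v.x⟩⟩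
instance : One (Heisenberg β) := ⟨⟨0, 0, 0⟩⟩
instance : Inv (Heisenberg β) := ⟨fun u => ⟨-u.x, -u.y, -u.z + β u.y u.x⟩⟩

@[simp] theorem mul_x (u v : Heisenberg β) : (u * v).x = u.x + v.x := rfl
@[simp] theorem mul_y (u v : Heisenberg β) : (u * v).y = u.y + v.y := rfl
@[simp] theorem mul_z (u v : Heisenberg β) : (u * v).z = u.z + v.z + β u.y v.x := rfl
@[simp] theorem one_x : (1 : Heisenberg β).x = 0 := rfl
@[simp] theorem one_y : (1 : Heisenberg β).y = 0 := rfl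
@[simp] theorem one_z : (1 : Heisenberg β).z = 0 := rfl
@[simp] theorem inv_x (u : Heisenberg β) : u⁻¹.x = -u.x := rfl
@[simp] theorem inv_y (u : Heisenberg β) : u⁻¹.y = -u.y := rfl
@[simp] theorem inv_z (u : Heisenberg β) : u⁻¹.z = -u.z + β u.y u.x := rfl

instance : Group (Heisenberg β) where
  mul_assoc u v w := by
    ext <;> simp only [mul_x, mul_y, mul_z, map_add, AddMonoidHom.add_apply] <;> abel
  one_mul u := by ext <;> simp
  mul_one u := by ext <;> simp
  inv_mul_cancel u := by ext <;> simp

theorem commute_iff {u v : Heisenberg β} : Commute u v ↔ β u.y v.x = β v.y u.x := by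
  rw [Commute, SemiconjBy, Heisenberg.ext_iff]
  simp [add_comm u.x, add_comm u.y, add_comm u.z]

theorem commutatorElement_eq (u v : Heisenberg β) :
    ⁅u, v⁆ = ⟨0, 0, β u.y v.x - β v.y u.x⟩ := by
  ext <;> simp [commutatorElement_def]; abel

theorem pow_eq {u : Heisenberg β} (hu : β u.y u.x = 0) (k : ℕ) :
    u ^ k = ⟨k • u.x, k • u.y, k • u.z⟩ := by
  induction k with
  | zero => ext <;> simp
  | succ k ih => ext <;> simp [pow_succ, ih, succ_nsmul, hu]

def xHom : Heisenberg β →* Multiplicative X where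
  toFun u := .ofAdd u.x
  map_one' := rfl
  map_mul' _ _ := rfl

def yHom : Heisenberg β →* Multiplicative Y where
  toFun u := .ofAdd u.y
  map_one' := rfl
  map_mul' _ _ := rfl

end Heisenberg

namespace Gnmp

open Subgroup

/-- The defining relations of `G_n(m,p)` for a family `t 0, t 1, …` (only `t 0, …, t n` matter);
`⁅x⁻¹, y⁻¹⁆ = x⁻¹y⁻¹xy` is the paper's commutator `[x, y]`. -/
structure Relations {T : Type*} [Group T] (n m p : ℕ) (t : ℕ → T) : Prop where
  pow_one : t 1 ^ p = 1
  pow_two : t 2 ^ p ^ m = 1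
  pow_sq : ∀ i, 3 ≤ i → i ≤ n → t i ^ p ^ 2 = 1
  pow_pred : t (n - 1) ^ p = t 0 ^ p
  commute_one_zero : Commute (t 1) (t 0)
  comm_last : ⁅(t n)⁻¹, (t 0)⁻¹⁆ = t 1
  comm_pred : ∀ i, 3 ≤ i → i ≤ n → ⁅(t (i - 1))⁻¹, (t 0)⁻¹⁆ = t i ^ p
  commute : ∀ i j, 1 ≤ i → i < j → j ≤ n → Commute (t i) (t j)

theorem relations_iff {T : Type*} [Group T] {n m p : ℕ} (hn : 3 ≤ n) (t : ℕ → T) :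
    Relations n m p t ↔ ∀ r ∈ GnmpRels n m p hn, FreeGroup.lift (t ∘ Fin.val) r = 1 := by
  have key : ∀ x y : T, x⁻¹ * y⁻¹ * x * y = ⁅x⁻¹, y⁻¹⁆ := fun x y => by
    rw [commutatorElement_def, inv_inv, inv_inv]
  constructor
  · intro ht r hr
    simp only [GnmpRels, Set.mem_union, Set.mem_singleton_iff, Set.mem_ofPred_eq] at hr
    rcases hr with ((((((rfl | rfl) | ⟨i, hi, hin, rfl⟩) | rfl) | rfl) | rfl) | ⟨i, hi, hin, rfl⟩) |
      ⟨i, j, hi, hij, hjn, rfl⟩ <;>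
    simp only [map_mul, map_inv, map_pow, FreeGroup.lift_apply_of, Function.comp_apply, key,
      mul_inv_eq_one, commutatorElement_eq_one_iff_commute, Commute.inv_inv_iff]
    exacts [ht.pow_one, ht.pow_two, ht.pow_sq i hi hin, ht.pow_pred, ht.commute_one_zero,
      ht.comm_last, ht.comm_pred i hi hin, ht.commute i j hi hij hjn]
  · intro h
    simp only [GnmpRels, Set.mem_union, Set.mem_singleton_iff, Set.mem_ofPred_eq, or_imp,
      forall_and, forall_eq, forall_exists_index] at h
    obtain ⟨⟨⟨⟨⟨⟨⟨h1, h2⟩, h3⟩, h4⟩, h5⟩, h6⟩, h7⟩, h8⟩ := h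
    replace h3 := fun i hi hin => h3 _ i hi hin rfl
    replace h7 := fun i hi hin => h7 _ i hi hin rfl
    replace h8 := fun i j hi hij hjn => h8 _ i j hi hij hjn rfl
    simp only [map_mul, map_inv, map_pow, FreeGroup.lift_apply_of, Function.comp_apply, key,
      mul_inv_eq_one, commutatorElement_eq_one_iff_commute, Commute.inv_inv_iff] at *
    exact ⟨h1, h2, h3, h4, h5, h6, h7, h8⟩

namespace Relations

variable {T : Type*} [Group T] {n m p : ℕ} {t : ℕ → T}

theorem commute_of_pos (ht : Relations n m p t) {i j : ℕ} (hi : 1 ≤ i) (hin : i ≤ n)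
    (hj : 1 ≤ j) (hjn : j ≤ n) : Commute (t i) (t j) := by
  rcases lt_trichotomy i j with h | rfl | h
  · exact ht.commute i j hi h hjn
  · exact Commute.refl _
  · exact (ht.commute j i hj h hin).symm

theorem comm_succ (ht : Relations n m p t) {k : ℕ} (hk : 2 ≤ k) (hkn : k < n) :
    ⁅(t k)⁻¹, (t 0)⁻¹⁆ = t (k + 1) ^ p := by
  simpa using ht.comm_pred (k + 1) (by omega) hkn

theorem commute_pow_zero (ht : Relations n m p t) {k : ℕ} (hk : 2 ≤ k) (hkn : k ≤ n) :
    Commute (t k ^ p) (t 0) := by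
  obtain rfl | hkn := hkn.eq_or_lt
  · exact commute_pow_of_commutatorElement_inv ht.comm_last
      (ht.commute_of_pos (by omega) le_rfl le_rfl (by omega)) ht.pow_one
  · refine commute_pow_of_commutatorElement_inv (ht.comm_succ hk hkn)
      ((ht.commute_of_pos (by omega) hkn.le (by omega) hkn).pow_right p) ?_
    rw [← pow_mul, ← sq, ht.pow_sq (k + 1) (by omega) hkn]

theorem commutatorElement_inv_mem (ht : Relations n m p t) {S : Subgroup T} (h1 : t 1 ∈ S)
    (hpow : ∀ k, 3 ≤ k → k ≤ n → t k ^ p ∈ S) {i j : ℕ} (hi : i ≤ n) (hj : j ≤ n) :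
    ⁅(t i)⁻¹, (t j)⁻¹⁆ ∈ S := by
  have zero : ∀ k ≤ n, ⁅(t k)⁻¹, (t 0)⁻¹⁆ ∈ S := by
    intro k hk
    rcases (by omega : k = 0 ∨ k = 1 ∨ (2 ≤ k ∧ k < n) ∨ k = n) with rfl | rfl | ⟨h2, hlt⟩ | rfl
    · rw [commutatorElement_self]
      exact one_mem _
    · rw [commutatorElement_eq_one_iff_commute.mpr ht.commute_one_zero.inv_inv]
      exact one_mem _
    · rw [ht.comm_succ h2 hlt]
      exact hpow _ (by omega) hlt
    · rw [ht.comm_last]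
      exact h1
  rcases Nat.eq_zero_or_pos j with rfl | hj0
  · exact zero i hi
  rcases Nat.eq_zero_or_pos i with rfl | hi0
  · rw [← commutatorElement_inv]
    exact inv_mem (zero j hj)
  rw [commutatorElement_eq_one_iff_commute.mpr (ht.commute_of_pos hi0 hi hj0 hj).inv_inv]
  exact one_mem _

end Relations

/-- `aᵢ`, with the index read modulo `n + 1`. -/
def gen (n m p : ℕ) (hn : 3 ≤ n) (i : ℕ) : PresentedGroup (GnmpRels n m p hn) :=
  PresentedGroup.of (Fin.ofNat (n + 1) i)

section Presentation

variable {n m p : ℕ} {hn : 3 ≤ n}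

local notation "G" => PresentedGroup (GnmpRels n m p hn)
local notation "𝐚" => gen n m p hn

theorem of_eq_gen (i : Fin (n + 1)) : (PresentedGroup.of i : G) = 𝐚 i := by
  rw [gen, Fin.ofNat_val_eq_self]

theorem gen_eq_of {i : ℕ} (hi : i < n + 1) : 𝐚 i = PresentedGroup.of ⟨i, hi⟩ :=
  (of_eq_gen ⟨i, hi⟩).symm

theorem closure_gen : closure (𝐚 '' Set.Iic n) = ⊤ := by
  convert PresentedGroup.closure_range_of (GnmpRels n m p hn)
  ext g
  constructor
  · rintro ⟨i, -, rfl⟩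
    exact ⟨_, rfl⟩
  · rintro ⟨i, rfl⟩
    exact ⟨i, Nat.lt_succ_iff.mp i.isLt, (of_eq_gen i).symm⟩

theorem relations_gen : Relations n m p 𝐚 := by
  refine (relations_iff hn _).mpr fun r hr => ?_
  have : FreeGroup.lift (𝐚 ∘ Fin.val) = PresentedGroup.mk (GnmpRels n m p hn) :=
    FreeGroup.ext_hom _ _ fun i => (of_eq_gen i).symm
  rw [this]
  exact PresentedGroup.one_of_mem hr

def lift {T : Type*} [Group T] {t : ℕ → T} (ht : Relations n m p t) : G →* T :=
  PresentedGroup.toGroup ((relations_iff hn t).mp ht)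

theorem lift_gen {T : Type*} [Group T] {t : ℕ → T} (ht : Relations n m p t) {i : ℕ}
    (hi : i ≤ n) : lift ht (𝐚 i) = t i := by
  rw [gen_eq_of (Nat.lt_succ_of_le hi), lift, PresentedGroup.toGroup.of]
  rfl

theorem mem_center_iff_commute_gen {x : G} : x ∈ center G ↔ ∀ i ≤ n, Commute (𝐚 i) x := by
  simp only [center_eq_iInf closure_gen, mem_iInf, Set.forall_mem_image, Set.mem_Iic,
    mem_centralizer_singleton_iff, Commute, SemiconjBy, eq_comm]

theorem gen_one_mem_center : 𝐚 1 ∈ center G := by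
  refine mem_center_iff_commute_gen.mpr fun i hi => ?_
  rcases Nat.eq_zero_or_pos i with rfl | hi0
  · exact relations_gen.commute_one_zero.symm
  · exact relations_gen.commute_of_pos hi0 hi le_rfl (by omega)

theorem gen_pow_mem_center {k : ℕ} (hk : 2 ≤ k) (hkn : k ≤ n) : 𝐚 k ^ p ∈ center G := by
  refine mem_center_iff_commute_gen.mpr fun i hi => ?_
  rcases Nat.eq_zero_or_pos i with rfl | hi0
  · exact (relations_gen.commute_pow_zero hk hkn).symm
  · exact (relations_gen.commute_of_pos hi0 hi (by omega) hkn).pow_right p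

theorem closure_pow_le_center : closure {𝐚 2 ^ p} ≤ center G :=
  (closure_le _).mpr (Set.singleton_subset_iff.mpr (gen_pow_mem_center le_rfl (by omega)))

theorem commutator_le_center : commutator G ≤ center G := by
  refine commutator_le_of_closure_eq_top (S := (𝐚 '' Set.Iic n)⁻¹)
    (by rw [closure_inv, closure_gen]) ?_
  rintro a ⟨i, hi, ha⟩ b ⟨j, hj, hb⟩
  rw [← inv_inv a, ← ha, ← inv_inv b, ← hb]
  exact relations_gen.commutatorElement_inv_mem gen_one_mem_center
    (fun k hk hkn => gen_pow_mem_center (by omega) hkn) hi hj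

theorem gen_one_mem_commutator : 𝐚 1 ∈ commutator G := by
  rw [← relations_gen.comm_last]
  exact commutatorElement_mem_commutator _ _

theorem gen_pow_mem_sup {i : ℕ} (hi : i ≤ n) :
    𝐚 i ^ p ∈ closure {𝐚 2 ^ p} ⊔ commutator G := by
  have pos : ∀ k, 1 ≤ k → k ≤ n → 𝐚 k ^ p ∈ closure {𝐚 2 ^ p} ⊔ commutator G := by
    intro k hk hkn
    rcases (by omega : k = 1 ∨ k = 2 ∨ 3 ≤ k) with rfl | rfl | hk3
    · exact mem_sup_right (pow_mem gen_one_mem_commutator p)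
    · exact mem_sup_left (subset_closure rfl)
    · rw [← relations_gen.comm_pred k hk3 hkn]
      exact mem_sup_right (commutatorElement_mem_commutator _ _)
  rcases Nat.eq_zero_or_pos i with rfl | hi0
  · rw [← relations_gen.pow_pred]
    exact pos (n - 1) (by omega) (by omega)
  · exact pos i hi0 hi

end Presentation

section HeisenbergQuotient

def mulP (p : ℕ) : ZMod p →+ ZMod (p ^ 2) :=
  ZMod.lift p ⟨zmultiplesHom _ (p : ZMod (p ^ 2)), by simp [← sq, ← Nat.cast_pow]⟩

theorem mulP_intCast (p : ℕ) (k : ℤ) : mulP p k = k * p := by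
  simp [mulP, ZMod.lift_coe, zsmul_eq_mul]

@[simp] theorem mulP_one (p : ℕ) : mulP p 1 = p := by
  simpa using mulP_intCast p 1

theorem mulP_eq_zero_iff {p : ℕ} (hp : 0 < p) {a : ZMod p} : mulP p a = 0 ↔ a = 0 := by
  refine ⟨fun ha => ?_, fun ha => ha ▸ map_zero _⟩
  rw [← ZMod.intCast_zmod_cast a, mulP_intCast] at ha
  rw [← ZMod.intCast_zmod_cast a, ZMod.intCast_zmod_eq_zero_iff_dvd]
  have hdvd := (ZMod.intCast_zmod_eq_zero_iff_dvd (a.cast * p) (p ^ 2)).mp (by push_cast; exact ha)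
  rw [Nat.cast_pow, sq] at hdvd
  exact (mul_dvd_mul_iff_right (by exact_mod_cast hp.ne')).mp hdvd

theorem natCast_pow_eq_zero {p m : ℕ} (hm : 2 ≤ m) : (p : ZMod (p ^ 2)) ^ m = 0 := by
  rw [← Nat.cast_pow, ZMod.natCast_eq_zero_iff]
  exact pow_dvd_pow p hm

def cocycle (p : ℕ) : (ℕ → ZMod p) →+ ZMod p →+ (ℕ → ZMod (p ^ 2)) :=
  AddMonoidHom.mk' (fun y => AddMonoidHom.mk' (fun x k => mulP p (y k * x))
    fun _ _ => by ext; simp [mul_add]) fun _ _ => by ext; simp [add_mul]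

@[simp] theorem cocycle_apply (p : ℕ) (y : ℕ → ZMod p) (x : ZMod p) (k : ℕ) :
    cocycle p y x k = mulP p (y k * x) := rfl

/-- `aₖ ↦ (0, eₖ, e_{k-1})` makes `[a_{k-1}, a₀] = p e_{k-1} = aₖ^p` hold, and the third
coordinate of `a₀` is forced by `a₀^p = a_{n-1}^p`. -/
def heisGen (n p : ℕ) : ℕ → Heisenberg (cocycle p)
  | 0 => ⟨1, 0, Pi.single (n - 2) 1⟩
  | 1 => ⟨0, 0, Pi.single n p⟩
  | k + 2 => ⟨0, Pi.single (k + 2) 1, Pi.single (k + 1) 1⟩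

variable {n m p : ℕ}

@[simp] theorem heisGen_zero : heisGen n p 0 = ⟨1, 0, Pi.single (n - 2) 1⟩ := rfl

@[simp] theorem heisGen_one : heisGen n p 1 = ⟨0, 0, Pi.single n p⟩ := rfl

theorem heisGen_of_two_le {k : ℕ} (hk : 2 ≤ k) :
    heisGen n p k = ⟨0, Pi.single k 1, Pi.single (k - 1) 1⟩ := by
  obtain ⟨k, rfl⟩ := Nat.exists_eq_add_of_le' hk
  rfl

theorem heisGen_x {k : ℕ} : (heisGen n p k).x = if k = 0 then 1 else 0 := by
  rcases (by omega : k = 0 ∨ k = 1 ∨ 2 ≤ k) with rfl | rfl | hk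
  · rfl
  · rfl
  · rw [heisGen_of_two_le hk, if_neg (by omega)]

theorem heisGen_y_apply {k j : ℕ} (hj : 2 ≤ j) :
    (heisGen n p k).y j = if k = j then 1 else 0 := by
  rcases (by omega : k = 0 ∨ k = 1 ∨ 2 ≤ k) with rfl | rfl | hk
  · simp [show 0 ≠ j by omega]
  · simp [show 1 ≠ j by omega]
  · simp [heisGen_of_two_le hk, Pi.single_apply, eq_comm]

theorem relations_heisGen (hn : 3 ≤ n) (hm : 2 ≤ m) : Relations n m p (heisGen n p) where
  pow_one := by
    rw [heisGen_one, Heisenberg.pow_eq (by simp)]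
    ext <;> simp [Pi.single_apply, ← sq, natCast_pow_eq_zero]
  pow_two := by
    rw [heisGen_of_two_le le_rfl, Heisenberg.pow_eq (by simp)]
    ext <;> simp [zero_pow (show m ≠ 0 by omega), natCast_pow_eq_zero hm]
  pow_sq i hi hin := by
    rw [heisGen_of_two_le (by omega), Heisenberg.pow_eq (by simp)]
    ext <;> simp
  pow_pred := by
    rw [heisGen_of_two_le (k := n - 1) (by omega), heisGen_zero, Heisenberg.pow_eq (by simp),
      Heisenberg.pow_eq (by simp)]
    ext <;> simp [Nat.sub_sub]
  commute_one_zero := by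
    simp [Heisenberg.commute_iff]
  comm_last := by
    rw [heisGen_of_two_le (k := n) (by omega), heisGen_zero, heisGen_one,
      Heisenberg.commutatorElement_eq]
    ext <;> simp [Pi.single_apply, apply_ite (mulP p)]
  comm_pred i hi hin := by
    rw [heisGen_of_two_le (k := i - 1) (by omega), heisGen_of_two_le (k := i) (by omega),
      heisGen_zero, Heisenberg.commutatorElement_eq, Heisenberg.pow_eq (by simp)]
    ext <;> simp [Pi.single_apply, apply_ite (mulP p)]
  commute i j hi hij _ := by
    simp [Heisenberg.commute_iff, heisGen_x, show i ≠ 0 by omega, show j ≠ 0 by omega]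

variable {hn : 3 ≤ n}

local notation "G" => PresentedGroup (GnmpRels n m p hn)
local notation "𝐚" => gen n m p hn

def toHeis (hm : 2 ≤ m) : G →* Heisenberg (cocycle p) := lift (relations_heisGen hn hm)

theorem toHeis_gen (hm : 2 ≤ m) {i : ℕ} (hi : i ≤ n) : toHeis hm (𝐚 i) = heisGen n p i :=
  lift_gen _ hi

theorem toHeis_x_eq_zero_and_y_eq_zero (hm : 2 ≤ m) (hp : 1 < p) {g : G} (hg : g ∈ center G) :
    (toHeis hm g).x = 0 ∧ (toHeis hm g).y = 0 := by
  have hcomm : ∀ i ≤ n, Commute (heisGen n p i) (toHeis hm g) := fun i hi => by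
    rw [← toHeis_gen hm hi]
    exact (mem_center_iff_commute_gen.mp hg i hi).map _
  have h0 := Heisenberg.commute_iff.mp (hcomm 0 (by omega))
  have hlast := congrFun (Heisenberg.commute_iff.mp (hcomm n le_rfl)) n
  rw [heisGen_of_two_le (by omega)] at hlast
  constructor
  · simpa [mulP_eq_zero_iff (by omega : 0 < p)] using hlast
  · funext k
    simpa [mulP_eq_zero_iff (by omega : 0 < p)] using (congrFun h0 k).symm

theorem center_le_sup (hm : 2 ≤ m) (hp : 1 < p) :
    center G ≤ closure {𝐚 2 ^ p} ⊔ commutator G := by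
  refine le_of_forall_mem_or_coordinate (PresentedGroup.closure_range_of _) le_sup_right
    (fun i => by rw [of_eq_gen]; exact gen_pow_mem_sup (Nat.lt_succ_iff.mp i.isLt)) fun i => ?_
  simp only [of_eq_gen, Fin.ext_iff]
  rcases (by omega : i.val = 0 ∨ i.val = 1 ∨ 2 ≤ i.val) with h | h | h
  · refine .inr ⟨Heisenberg.xHom.comp (toHeis hm), fun j => ?_, fun g hg => ?_⟩
    · simp [toHeis_gen hm (Nat.lt_succ_iff.mp j.isLt), heisGen_x, h, Heisenberg.xHom]
    · simp [Heisenberg.xHom, (toHeis_x_eq_zero_and_y_eq_zero hm hp hg).1]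
  · rw [h]
    exact .inl (mem_sup_right gen_one_mem_commutator)
  · refine .inr ⟨(AddMonoidHom.toMultiplicative (Pi.evalAddMonoidHom _ i.val)).comp
      (Heisenberg.yHom.comp (toHeis hm)), fun j => ?_, fun g hg => ?_⟩
    · simp [toHeis_gen hm (Nat.lt_succ_iff.mp j.isLt), heisGen_y_apply h, Heisenberg.yHom]
    · simp [Heisenberg.yHom, (toHeis_x_eq_zero_and_y_eq_zero hm hp hg).2]

theorem commutator_ne_bot (hm : 2 ≤ m) (hp : 1 < p) : commutator G ≠ ⊥ := by
  intro h
  have h1 : 𝐚 1 = 1 := by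
    rw [← mem_bot, ← h]
    exact gen_one_mem_commutator
  have h2 := congrArg (fun u : Heisenberg (cocycle p) => u.z n)
    (toHeis_gen (hn := hn) hm (i := 1) (by omega))
  rw [h1, map_one] at h2
  have hp2 : ¬ p ^ 2 ∣ p := fun hdvd =>
    (Nat.pow_lt_pow_right hp one_lt_two).not_ge (by simpa using Nat.le_of_dvd (by omega) hdvd)
  exact hp2 ((ZMod.natCast_eq_zero_iff _ _).mp (by simpa using h2.symm))

end HeisenbergQuotient

section AbelianQuotient

/-- `a₀` must go where `a_{n-1}` goes, and `a_{n-1} = a₂` exactly when `n = 3`. -/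
def abGen (n m p : ℕ) (i : ℕ) : Multiplicative (ZMod (p ^ m)) :=
  .ofAdd (if i = 2 ∨ i = 0 ∧ n = 3 then 1 else 0)

variable {n m p : ℕ}

theorem relations_abGen : Relations n m p (abGen n m p) where
  pow_one := by simp [abGen]
  pow_two := by simp [abGen, ← ofAdd_nsmul]
  pow_sq i hi hin := by simp [abGen, show i ≠ 2 by omega, show i ≠ 0 by omega]
  pow_pred := by
    simp only [abGen]
    congr 3
    simp
  commute_one_zero := Commute.all _ _
  comm_last := by
    rw [commutatorElement_eq_one_iff_commute.mpr (Commute.all _ _)]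
    simp [abGen]
  comm_pred i hi hin := by
    rw [commutatorElement_eq_one_iff_commute.mpr (Commute.all _ _)]
    simp [abGen, show i ≠ 2 by omega, show i ≠ 0 by omega]
  commute _ _ _ _ _ := Commute.all _ _

variable {hn : 3 ≤ n}

local notation "G" => PresentedGroup (GnmpRels n m p hn)
local notation "𝐚" => gen n m p hn

theorem closure_pow_inf_commutator_eq_bot : closure {𝐚 2 ^ p} ⊓ commutator G = ⊥ := by
  set f : G →* Multiplicative (ZMod (p ^ m)) := lift relations_abGen
  have hf : f (𝐚 2) = .ofAdd 1 := by
    rw [lift_gen _ (by omega), abGen, if_pos (.inl rfl)]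
  have hord : orderOf (f (𝐚 2)) = orderOf (𝐚 2) := by
    refine Nat.dvd_antisymm (orderOf_map_dvd f _) ?_
    rw [hf, orderOf_ofAdd_eq_addOrderOf, ZMod.addOrderOf_one]
    exact orderOf_dvd_of_pow_eq_one relations_gen.pow_two
  refine eq_bot_iff.mpr (le_trans (inf_le_inf ?_ (Abelianization.commutator_subset_ker f))
    (f.zpowers_inf_ker_eq_bot hord).le)
  exact (closure_le _).mpr (Set.singleton_subset_iff.mpr (npow_mem_zpowers _ _))

end AbelianQuotient

end Gnmp

/-- For `G = G_n(m,p)`: the center is the internal direct product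
`Z(G) = ⟨a₂ᵖ⟩ × G'`, and `G` is nilpotent of class exactly 2. -/
theorem center_Gnmp (n m p : ℕ) (hp : p.Prime) (hm : 2 ≤ m) (hn : 3 ≤ n) :
    Subgroup.center (PresentedGroup (GnmpRels n m p hn)) =
      Subgroup.closure {(PresentedGroup.of ⟨2, by omega⟩ :
          PresentedGroup (GnmpRels n m p hn)) ^ p} ⊔
        commutator (PresentedGroup (GnmpRels n m p hn)) ∧
    Subgroup.closure {(PresentedGroup.of ⟨2, by omega⟩ :
          PresentedGroup (GnmpRels n m p hn)) ^ p} ⊓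
        commutator (PresentedGroup (GnmpRels n m p hn)) = ⊥ ∧
    commutator (PresentedGroup (GnmpRels n m p hn)) ≤
      Subgroup.center (PresentedGroup (GnmpRels n m p hn)) ∧
    commutator (PresentedGroup (GnmpRels n m p hn)) ≠ ⊥ := by
  rw [← Gnmp.gen_eq_of]
  exact ⟨(Gnmp.center_le_sup hm hp.one_lt).antisymm
      (sup_le Gnmp.closure_pow_le_center Gnmp.commutator_le_center),
    Gnmp.closure_pow_inf_commutator_eq_bot, Gnmp.commutator_le_center,
    Gnmp.commutator_ne_bot hm hp.one_lt⟩
end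

section
/- If G is a group with Z(G) ⊆ G', then any two central automorphisms of G commute. -/
/-!
A central automorphism `φ` moves each element only by a central factor, so it fixes every
commutator and hence all of `G'`. Write `ψ g = g z` and `φ g = g w` with `z, w` central. Since
`Z(G) ≤ G'`, the automorphism `φ` fixes `z` and `ψ` fixes `w`, so
`φ (ψ g) = g w z` and `ψ (φ g) = g z w`, which agree because `z` and `w` commute.
-/

open Subgroup

open scoped commutatorElement

section

variable {G : Type*} [Group G]

theorem commutatorElement_mul_mem_center (a b : G) {z w : G} (hz : z ∈ center G)
    (hw : w ∈ center G) : ⁅a * z, b * w⁆ = ⁅a, b⁆ := by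
  have hz' := mem_center_iff.mp hz
  have hw' := mem_center_iff.mp hw
  calc ⁅a * z, b * w⁆ = a * (z * (b * w)) * z⁻¹ * a⁻¹ * w⁻¹ * b⁻¹ := by group
    _ = a * b * (w * a⁻¹) * w⁻¹ * b⁻¹ := by rw [← hz' (b * w)]; group
    _ = ⁅a, b⁆ := by rw [← hw' a⁻¹]; group

theorem map_eq_self_of_mem_commutator {F : Type*} [FunLike F G G] [MonoidHomClass F G G]
    (f : F) (hf : ∀ g : G, g⁻¹ * f g ∈ center G) {x : G} (hx : x ∈ commutator G) : f x = x := by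
  let fixedPoints : Subgroup G := MonoidHom.eqLocus (f : G →* G) (MonoidHom.id G)
  suffices commutator G ≤ fixedPoints from this hx
  rw [commutator_def, commutator_le]
  intro a _ b _
  show f ⁅a, b⁆ = ⁅a, b⁆
  rw [map_commutatorElement, ← mul_inv_cancel_left a (f a), ← mul_inv_cancel_left b (f b)]
  exact commutatorElement_mul_mem_center a b (hf a) (hf b)

end

/-- If `Z(G) ⊆ G'`, then any two central automorphisms of `G` commute. -/
theorem central_auts_commute_of_center_le_commutator (G : Type*) [Group G]
    (h : Subgroup.center G ≤ commutator G) (φ ψ : G ≃* G)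
    (hφ : ∀ g : G, g⁻¹ * φ g ∈ Subgroup.center G)
    (hψ : ∀ g : G, g⁻¹ * ψ g ∈ Subgroup.center G) :
    ∀ g : G, φ (ψ g) = ψ (φ g) := by
  intro g
  obtain ⟨z, hz, hψg⟩ : ∃ z ∈ center G, ψ g = g * z := ⟨_, hψ g, (mul_inv_cancel_left g _).symm⟩
  obtain ⟨w, hw, hφg⟩ : ∃ w ∈ center G, φ g = g * w := ⟨_, hφ g, (mul_inv_cancel_left g _).symm⟩
  have hφz : φ z = z := map_eq_self_of_mem_commutator φ hφ (h hz)
  have hψw : ψ w = w := map_eq_self_of_mem_commutator ψ hψ (h hw)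
  calc φ (ψ g) = g * w * z := by rw [hψg, map_mul, hφz, hφg]
    _ = g * z * w := by rw [mul_assoc, mul_assoc, mem_center_iff.mp hz w]
    _ = ψ (φ g) := by rw [hφg, map_mul, hψw, hψg]
end
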